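/- Let S be a sub-semifield of 𝕋 (with S ≠ 𝔹) and let A be an S-algebra with structure map ι : S → A. Let P' be an S-continuous prime congruence on A, and let P ⊆ P' be a prime congruence on A with the same ideal-kernel as P', i.e., {a : (a,0) ∈ P} = {a : (a,0) ∈ P'}. Then P is S-continuous. In particular, if P' is S-continuous with trivial ideal-kernel, then every prime congruence contained in P' is S-continuous with trivial ideal-kernel. -/

import Mathlib

/-- A totally ordered idempotent semifield, assumed different from the Boolean semifield `𝔹`. -/
class IdemTOSemifield (K : Type*) extends CommSemiring K, LinearOrder K where
  add_eq_max : ∀ a b : K, a + b = max a b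
  exists_inv : ∀ a : K, a ≠ 0 → ∃ b : K, a * b = 1
  exists_nontrivial_unit : ∃ a : K, a ≠ 0 ∧ a ≠ 1

/-- The canonical topology on a totally ordered semifield. -/
def canonicalTopology (K : Type*) [IdemTOSemifield K] : TopologicalSpace K :=
  TopologicalSpace.generateFrom
    {s : Set K | (∃ a : K, a ≠ 0 ∧ s = {a}) ∨ (∃ a : K, a ≠ 0 ∧ s = Set.Iic a)}

private theorem nnreal_mul_max (a b c : NNReal) : a * max b c = max (a * b) (a * c) := by
  rcases le_total b c with h | h
  · rw [max_eq_right h, max_eq_right (mul_le_mul_right h a)]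
  · rw [max_eq_left h, max_eq_left (mul_le_mul_right h a)]

private theorem nnreal_max_mul (a b c : NNReal) : max a b * c = max (a * c) (b * c) := by
  rcases le_total a b with h | h
  · rw [max_eq_right h, max_eq_right (mul_le_mul_left h c)]
  · rw [max_eq_left h, max_eq_left (mul_le_mul_left h c)]

/-- The tropical semifield `𝕋`, modelled as `[0, ∞)` with addition `max` and the usual
multiplication. -/
def Trop : Type := NNReal

namespace Trop

/-- Regard a nonnegative real as an element of `Trop`. -/
def mk (x : NNReal) : Trop := x

/-- The underlying nonnegative real of an element of `Trop`. -/
def toNNReal (x : Trop) : NNReal := x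

noncomputable instance instLinearOrder : LinearOrder Trop :=
  inferInstanceAs (LinearOrder NNReal)

noncomputable instance instAdd : Add Trop := ⟨fun a b => max a b⟩
instance instZero : Zero Trop := inferInstanceAs (Zero NNReal)
instance instMul : Mul Trop := inferInstanceAs (Mul NNReal)
instance instOne : One Trop := inferInstanceAs (One NNReal)

noncomputable instance instCommSemiring : CommSemiring Trop where
  __ : CommMonoidWithZero Trop := inferInstanceAs (CommMonoidWithZero NNReal)
  add a b := a + b
  nsmul := nsmulRec
  add_assoc a b c := max_assoc a b c
  zero_add a := max_eq_right (zero_le : (0 : NNReal) ≤ toNNReal a)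
  add_zero a := max_eq_left (zero_le : (0 : NNReal) ≤ toNNReal a)
  add_comm a b := max_comm a b
  left_distrib a b c := by exact nnreal_mul_max a b c
  right_distrib a b c := by exact nnreal_max_mul a b c

noncomputable instance instIdemTOSemifield : IdemTOSemifield Trop where
  add_eq_max a b := rfl
  exists_inv a ha :=
    ⟨mk (toNNReal a)⁻¹, by exact mul_inv_cancel₀ (a := toNNReal a) (fun h => ha h)⟩
  exists_nontrivial_unit :=
    ⟨mk 2, fun h => two_ne_zero (show (2 : NNReal) = 0 from h),
      fun h => by
        have : (2 : NNReal) = 1 := h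
        norm_num at this⟩

end Trop

/-- `S` is (isomorphic to) a sub-semifield of the tropical semifield `𝕋` (and `S ≠ 𝔹`). -/
class TropSub (S : Type*) extends IdemTOSemifield S where
  emb : S →+* Trop
  emb_injective : Function.Injective emb

/-- A prime congruence on a commutative semiring: the congruence is proper and the quotient is
totally ordered with respect to the canonical order and cancellative. -/
structure IsPrimeCon {A : Type*} [CommSemiring A] (P : RingCon A) : Prop where
  proper : ¬ P 0 1
  totalOrd : ∀ a b : A, P (a + b) a ∨ P (a + b) b
  cancel : ∀ a b c : A, ¬ P a 0 → P (a * b) (a * c) → P b c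

/-- `x ≤_P y`: the image of `x` in `A/P` is at most that of `y` in the canonical order. -/
def leP {A : Type*} [CommSemiring A] (P : RingCon A) (x y : A) : Prop := P (x + y) y

/-- `x <_P y`: the image of `x` in `A/P` is strictly below that of `y`. -/
def ltP {A : Type*} [CommSemiring A] (P : RingCon A) (x y : A) : Prop := P (x + y) y ∧ ¬ P x y

/-- A prime congruence `P` on an `S`-algebra `A` (with structure map `ι`) is `S`-continuous:
for all `f, g` not in the ideal-kernel of `P` there is a nonzero `b ∈ S` with `ι b * g <_P f`. -/
def SCont {S A : Type*} [CommSemiring S] [CommSemiring A] (ι : S →+* A) (P : RingCon A) : Prop :=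
  ∀ f g : A, ¬ P f 0 → ¬ P g 0 → ∃ b : S, b ≠ 0 ∧ ltP P (ι b * g) f

/-!
Statement 13: if `P'` is an `S`-continuous prime congruence on an `S`-algebra `A` and `P ⊆ P'` is
a prime congruence with the same ideal-kernel, then `P` is `S`-continuous. In particular, if `P'`
is `S`-continuous with trivial ideal-kernel, then every prime congruence contained in `P'` is
`S`-continuous with trivial ideal-kernel.
-/

theorem scontinuous_of_le_of_same_ideal_kernel {S A : Type*} [TropSub S] [CommSemiring A]
    (ι : S →+* A) :
    (∀ P P' : RingCon A, IsPrimeCon P' → SCont ι P' → IsPrimeCon P →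
      (∀ f g : A, P f g → P' f g) → (∀ a : A, P a 0 ↔ P' a 0) → SCont ι P) ∧
    (∀ P P' : RingCon A, IsPrimeCon P' → SCont ι P' → (∀ a : A, P' a 0 → a = 0) →
      IsPrimeCon P → (∀ f g : A, P f g → P' f g) →
        SCont ι P ∧ ∀ a : A, P a 0 → a = 0) := by
  have main : ∀ P P' : RingCon A, IsPrimeCon P' → SCont ι P' → IsPrimeCon P →
      (∀ f g : A, P f g → P' f g) → (∀ a : A, P a 0 ↔ P' a 0) → SCont ι P := by
    intro P P' hP' hS hP hle hker f g hf hg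
    have hf' : ¬ P' f 0 := fun h => hf ((hker f).mpr h)
    have hg' : ¬ P' g 0 := fun h => hg ((hker g).mpr h)
    have toLe : ∀ x y : A, ltP P' x y → P (x + y) y := by
      rintro x y ⟨h1, h2⟩
      rcases hP.totalOrd x y with h | h
      · exact absurd (P'.trans (P'.symm (hle _ _ h)) h1) h2
      · exact h
    obtain ⟨b, hb0, hlt⟩ := hS f g hf' hg'
    by_cases hbf : P (ι b * g) f
    · have hbg0 : ¬ P' (ι b * g) 0 := fun h0 => hf' (P'.trans (P'.symm (hle _ _ hbf)) h0)
      obtain ⟨c, hc0, hlt2⟩ := hS (ι b * g) (ι b * g) hbg0 hbg0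
      have e : ι (c * b) * g = ι c * (ι b * g) := by rw [map_mul, mul_assoc]
      refine ⟨c * b, ?_, ?_, ?_⟩
      · intro h
        obtain ⟨c', hc'⟩ := IdemTOSemifield.exists_inv c hc0
        have : c' * (c * b) = b := by rw [← mul_assoc, mul_comm c' c, hc', one_mul]
        rw [h, mul_zero] at this
        exact hb0 this.symm
      · show P (ι (c * b) * g + f) f
        rw [e]
        exact P.trans (P.trans (P.add (P.refl _) (P.symm hbf)) (toLe _ _ hlt2)) hbf
      · intro hco
        rw [e] at hco
        exact hlt2.2 (hle _ _ (P.trans hco (P.symm hbf)))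
    · exact ⟨b, hb0, toLe _ _ hlt, hbf⟩
  refine ⟨main, fun P P' hP' hS hker0 hP hle => ?_⟩
  have hker : ∀ a : A, P a 0 ↔ P' a 0 := fun a =>
    ⟨fun h => hle _ _ h, fun h => by rw [hker0 a h]; exact P.refl 0⟩
  exact ⟨main P P' hP' hS hP hle hker, fun a ha => hker0 a (hle _ _ ha)⟩
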